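/- arXiv:2503.17769 — 4 statements merged into one kernel-verified Lean document; each statement's English description precedes it below -/
import Mathlib

section
/- The intersection of the subgroup K = {classes of [[1,a],[0,b]] : a ∈ F_q, b ∈ F_q^*} with the centralizer S of h = [[0,-1],[1,-1]] in PGL(2,q) is trivial, where q is an odd prime power. -/
open Matrix

/-- `PGL(2,q)` as the quotient of `GL(2,q)` by its center (the scalar matrices). -/
abbrev PGL2 (F : Type) [Field F] : Type :=
  GL (Fin 2) F ⧸ Subgroup.center (GL (Fin 2) F)

/-- The class in `PGL(2,q)` of a matrix with nonzero determinant. -/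
noncomputable def cls {F : Type} [Field F] (M : Matrix (Fin 2) (Fin 2) F)
    (h : M.det ≠ 0) : PGL2 F :=
  QuotientGroup.mk (Matrix.GeneralLinearGroup.mkOfDetNeZero M h)

/-- The image in `PGL(2,q)` of the order-3 element `[[0,-1],[1,-1]]`. -/
noncomputable def hbar (F : Type) [Field F] : PGL2 F :=
  cls !![0, -1; 1, -1] (by norm_num [Matrix.det_fin_two_of])

/-- The subgroup `K` of `PGL(2,q)`, consisting of the classes of the matrices `[[1,a],[0,b]]`
with `a ∈ F_q`, `b ∈ F_q^*`. -/
def Kset (F : Type) [Field F] : Set (PGL2 F) :=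
  {x | ∃ (a b : F) (hb : b ≠ 0),
    x = cls !![1, a; 0, b] (by simpa [Matrix.det_fin_two_of] using hb)}

/-- The intersection of `K = {[[1,a],[0,b]] : a ∈ F_q, b ∈ F_q^*}` with the centralizer `S`
of `h = [[0,-1],[1,-1]]` in `PGL(2,q)` is trivial, for `q` an odd prime power. -/
theorem stmt7 (p k : ℕ) (hp : p.Prime) (hodd : Odd p) (hk : 0 < k)
    (F : Type) [Field F] [Fintype F] (hcard : Fintype.card F = p ^ k)
    (x : PGL2 F) (hxK : x ∈ Kset F) (hxS : x ∈ Subgroup.centralizer {hbar F}) :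
    x = 1 := by
  obtain ⟨a, b, hb, rfl⟩ := hxK
  rw [Subgroup.mem_centralizer_iff] at hxS
  have h1 := hxS (hbar F) rfl
  set M' := Matrix.GeneralLinearGroup.mkOfDetNeZero !![1, a; 0, b]
    (by simpa [Matrix.det_fin_two_of] using hb) with hM'
  set H' := Matrix.GeneralLinearGroup.mkOfDetNeZero !![(0:F), -1; 1, -1]
    (by norm_num [Matrix.det_fin_two_of]) with hH'
  have h2 : QuotientGroup.mk (H' * M') = (QuotientGroup.mk (M' * H') :
      GL (Fin 2) F ⧸ Subgroup.center (GL (Fin 2) F)) := by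
    simpa [hbar, cls, QuotientGroup.mk_mul] using h1
  rw [QuotientGroup.eq] at h2
  set z := (H' * M')⁻¹ * (M' * H') with hzdef
  have hz := Subgroup.mem_center_iff.mp h2
  set Z : Matrix (Fin 2) (Fin 2) F := (z : Matrix (Fin 2) (Fin 2) F) with hZ
  have hU := hz (Matrix.GeneralLinearGroup.mkOfDetNeZero !![(1:F),1;0,1]
    (by norm_num [Matrix.det_fin_two_of]))
  have hL := hz (Matrix.GeneralLinearGroup.mkOfDetNeZero !![(1:F),0;1,1]
    (by norm_num [Matrix.det_fin_two_of]))
  have hUm : !![(1:F),1;0,1] * Z = Z * !![(1:F),1;0,1] := congrArg Units.val hU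
  have hLm : !![(1:F),0;1,1] * Z = Z * !![(1:F),0;1,1] := congrArg Units.val hL
  have hZeta : Z = !![Z 0 0, Z 0 1; Z 1 0, Z 1 1] := Matrix.eta_fin_two Z
  rw [hZeta] at hUm hLm
  simp only [Matrix.mul_fin_two] at hUm hLm
  rw [← Matrix.ext_iff] at hUm hLm
  have e10 : Z 1 0 = 0 := by have := hUm 0 0; norm_num at this; linear_combination this
  have e01 : Z 0 1 = 0 := by have := hLm 0 0; norm_num at this; linear_combination this
  have e00 : Z 1 1 = Z 0 0 := by have := hUm 0 1; norm_num at this; linear_combination this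
  have hkey : (H' * M') * z = M' * H' := by rw [hzdef]; group
  have hkeym : (!![(0:F), -1; 1, -1] * !![1, a; 0, b]) * Z
      = !![1, a; 0, b] * !![(0:F), -1; 1, -1] := congrArg Units.val hkey
  rw [hZeta, e10, e01, e00] at hkeym
  set c := Z 0 0 with hc
  simp only [Matrix.mul_fin_two] at hkeym
  rw [← Matrix.ext_iff] at hkeym
  have E00 := hkeym 0 0
  have E01 := hkeym 0 1
  have E10 := hkeym 1 0
  have E11 := hkeym 1 1
  norm_num at E00 E01 E10 E11
  -- E00 : 0 = a ; E10 : c = b ; E11 : (a - b) * c = -b (roughly)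
  have ha : a = 0 := by linear_combination -E00
  have hb1 : b = 1 := by
    have h3 : b * (b - 1) = 0 := by linear_combination -E11 + c * ha - b * E10
    rcases mul_eq_zero.mp h3 with h | h
    · exact absurd h hb
    · linear_combination h
  subst ha hb1
  have hone : M' = 1 := Units.ext (by rw [hM']; exact Matrix.one_fin_two.symm)
  show QuotientGroup.mk M' = 1
  rw [hone]
  rfl
end

section
/- Let q be an odd prime power with q ≡ 2 (mod 3). The equation b^2 - ab + a^2 + a + 1 = -b in F_q has exactly one solution (a,b) with b ≠ 0, namely a = b = -1. -/
/-! Substituting `x = a + 1`, `y = b + 1` turns the equation into `x² - xy + y² = 0`. If `y ≠ 0`,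
then `-x / y` is a root of `X² + X + 1`, i.e. a primitive cube root of unity, and `F_q` has none
because `3 ∤ q - 1`. -/

theorem FiniteField.sq_add_self_add_one_ne_zero {F : Type*} [Field F] [Fintype F]
    (hF : Fintype.card F % 3 = 2) (ω : F) : ω ^ 2 + ω + 1 ≠ 0 := by
  intro hω
  have hω3 : ω ^ 3 = 1 := by linear_combination (ω - 1) * hω
  have hω0 : ω ≠ 0 := by
    rintro rfl
    norm_num at hω
  obtain ⟨k, hk⟩ : ∃ k, Fintype.card F = 3 * k + 2 := ⟨Fintype.card F / 3, by omega⟩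
  have hω1 : ω = 1 := by
    have h := FiniteField.pow_card_sub_one_eq_one ω hω0
    rwa [hk, show 3 * k + 2 - 1 = 3 * k + 1 by omega, pow_succ, pow_mul, hω3, one_pow,
      one_mul] at h
  -- Then `3 = 0` in `F`, while `q = 3k + 2` vanishes in `F`, so `2 = 0` as well.
  have h3 : (3 : F) = 0 := by
    rw [hω1] at hω
    linear_combination hω
  have hcard := FiniteField.cast_card_eq_zero F
  rw [hk] at hcard
  push_cast at hcard
  exact (one_ne_zero : (1 : F) ≠ 0) (by linear_combination (k + 1) * h3 - hcard)

theorem sq_sub_mul_add_sq_eq_zero_iff {K : Type*} [Field K] (hK : ∀ ω : K, ω ^ 2 + ω + 1 ≠ 0)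
    {x y : K} : x ^ 2 - x * y + y ^ 2 = 0 ↔ x = 0 ∧ y = 0 := by
  constructor
  · intro h
    by_cases hy : y = 0
    · subst hy
      exact ⟨pow_eq_zero_iff two_ne_zero |>.mp (by linear_combination h), rfl⟩
    · refine absurd ?_ (hK (-x / y))
      field_simp
      linear_combination h
  · rintro ⟨rfl, rfl⟩
    ring

theorem stmt9_general (p n : ℕ)
    (F : Type) [Field F] [Fintype F] (hcard : Fintype.card F = p ^ n)
    (hmod : p ^ n % 3 = 2) (a b : F) :
    (b ≠ 0 ∧ b ^ 2 - a * b + a ^ 2 + a + 1 = -b) ↔ (a = -1 ∧ b = -1) := by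
  have key : (a + 1) ^ 2 - (a + 1) * (b + 1) + (b + 1) ^ 2 = 0 ↔ a + 1 = 0 ∧ b + 1 = 0 :=
    sq_sub_mul_add_sq_eq_zero_iff (FiniteField.sq_add_self_add_one_ne_zero (hcard ▸ hmod))
  constructor
  · rintro ⟨-, h⟩
    obtain ⟨ha, hb⟩ := key.mp (by linear_combination h)
    exact ⟨eq_neg_of_add_eq_zero_left ha, eq_neg_of_add_eq_zero_left hb⟩
  · rintro ⟨rfl, rfl⟩
    exact ⟨neg_ne_zero.mpr one_ne_zero, by ring⟩

/-- For `q` an odd prime power with `q ≡ 2 (mod 3)`, the equation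
`b² - ab + a² + a + 1 = -b` in `F_q` has exactly one solution `(a,b)` with `b ≠ 0`,
namely `a = b = -1`. -/
theorem stmt9 (p n : ℕ) (hp : p.Prime) (hodd : Odd p) (hn : 0 < n)
    (F : Type) [Field F] [Fintype F] (hcard : Fintype.card F = p ^ n)
    (hmod : p ^ n % 3 = 2) (a b : F) :
    (b ≠ 0 ∧ b ^ 2 - a * b + a ^ 2 + a + 1 = -b) ↔ (a = -1 ∧ b = -1) :=
  stmt9_general p n F hcard hmod a b
end

section
/- Let q be an odd prime power, U = [[a, b-a-1],[b,-1-a]] with b^2 - ab + a^2 + a + 1 = b, b ≠ 0, and V_α = [[1,α],[-α,1+α]] for α ∈ F_q with α^2 + α + 1 ≠ 0. Then Tr(V_α U V_α^{-1} U^{-1}) = 2(α+1)(α^2+α+1)^{-1}, where V_α^{-1} is computed as (α^2+α+1)^{-1}[[1+α,-α],[α,1]]. -/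
open Matrix

/-!
For `2 × 2` matrices, `A⁻¹ = (det A)⁻¹ • adj A`, and the trace of `A B (adj A) (adj B)` is a
polynomial in `tr A`, `tr B`, `tr (A B)`, `det A`, `det B` (the Fricke identity, in a form valid
without invertibility). The relation on `a, b` says exactly that `det U = 1`, and a direct
computation gives `tr U = tr (V_α U) = -1`, `tr V_α = α + 2`, `det V_α = α² + α + 1`; the
Fricke polynomial then evaluates to `2 (α + 1)`.
-/

theorem Matrix.trace_mul_mul_adjugate_mul_adjugate_fin_two {R : Type*} [CommRing R]
    (A B : Matrix (Fin 2) (Fin 2) R) :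
    trace (A * B * adjugate A * adjugate B) =
      B.det * A.trace ^ 2 + A.det * B.trace ^ 2 + (A * B).trace ^ 2
        - A.trace * B.trace * (A * B).trace - 2 * A.det * B.det := by
  rw [eta_fin_two A, eta_fin_two B]
  simp only [adjugate_fin_two_of, det_fin_two_of, trace_fin_two_of, mul_fin_two]
  ring

theorem Matrix.inv_eq_adjugate_of_det_eq_one {n R : Type*} [Fintype n] [DecidableEq n]
    [CommRing R] {A : Matrix n n R} (h : A.det = 1) : A⁻¹ = adjugate A := by
  rw [inv_def, h, Ring.inverse_one, one_smul]

theorem stmt16_general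
    (F : Type) [Field F]
    (a b α : F) (hrel : b ^ 2 - a * b + a ^ 2 + a + 1 = b) :
    Matrix.trace
      ((!![1, α; -α, 1 + α] : Matrix (Fin 2) (Fin 2) F) * !![a, b - a - 1; b, -1 - a] *
        ((α ^ 2 + α + 1)⁻¹ • (!![1 + α, -α; α, 1] : Matrix (Fin 2) (Fin 2) F)) *
        (!![a, b - a - 1; b, -1 - a] : Matrix (Fin 2) (Fin 2) F)⁻¹) =
      2 * (α + 1) * (α ^ 2 + α + 1)⁻¹ := by
  set V : Matrix (Fin 2) (Fin 2) F := !![1, α; -α, 1 + α]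
  set U : Matrix (Fin 2) (Fin 2) F := !![a, b - a - 1; b, -1 - a]
  have hV : (!![1 + α, -α; α, 1] : Matrix (Fin 2) (Fin 2) F) = adjugate V := by
    simp [V, adjugate_fin_two_of]
  have hdetV : V.det = α ^ 2 + α + 1 := by
    simp only [V, det_fin_two_of]; ring
  have hdetU : U.det = 1 := by
    simp only [U, det_fin_two_of]; linear_combination -hrel
  have htrV : V.trace = α + 2 := by
    simp only [V, trace_fin_two_of]; ring
  have htrU : U.trace = -1 := by
    simp only [U, trace_fin_two_of]; ring
  have htrVU : (V * U).trace = -1 := by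
    simp only [V, U, mul_fin_two, trace_fin_two_of]; ring
  rw [hV, inv_eq_adjugate_of_det_eq_one hdetU, Matrix.mul_smul, Matrix.smul_mul, trace_smul,
    trace_mul_mul_adjugate_mul_adjugate_fin_two, hdetV, hdetU, htrV, htrU, htrVU, smul_eq_mul]
  ring

/-- For `U = [[a, b-a-1],[b,-1-a]]` with `b² - ab + a² + a + 1 = b`, `b ≠ 0`, and
`V_α = [[1,α],[-α,1+α]]` with `α² + α + 1 ≠ 0`, we have
`Tr(V_α U V_α⁻¹ U⁻¹) = 2(α+1)(α²+α+1)⁻¹`, where `V_α⁻¹ = (α²+α+1)⁻¹ [[1+α,-α],[α,1]]`. -/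
theorem stmt16 (p n : ℕ) (hp : p.Prime) (hodd : Odd p) (hn : 0 < n)
    (F : Type) [Field F] [Fintype F] (hcard : Fintype.card F = p ^ n)
    (a b α : F) (hb : b ≠ 0) (hrel : b ^ 2 - a * b + a ^ 2 + a + 1 = b)
    (hα : α ^ 2 + α + 1 ≠ 0) :
    Matrix.trace
      ((!![1, α; -α, 1 + α] : Matrix (Fin 2) (Fin 2) F) * !![a, b - a - 1; b, -1 - a] *
        ((α ^ 2 + α + 1)⁻¹ • (!![1 + α, -α; α, 1] : Matrix (Fin 2) (Fin 2) F)) *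
        (!![a, b - a - 1; b, -1 - a] : Matrix (Fin 2) (Fin 2) F)⁻¹) =
      2 * (α + 1) * (α ^ 2 + α + 1)⁻¹ :=
  stmt16_general F a b α hrel
end

section
/- Let q = p^k with p an odd prime, p ≠ 3. If x ∈ PSL(2,q) commutes with every element of order 3 in PSL(2,q), then x is the identity. -/
open Matrix

private lemma psl_comm (F : Type) [Field F] (A B : Matrix.SpecialLinearGroup (Fin 2) F)
    (h : ((A : Matrix.ProjectiveSpecialLinearGroup (Fin 2) F) * B) = B * A) :
    ∃ r : F, r ^ 2 = 1 ∧ B.1 * A.1 = A.1 * B.1 * Matrix.scalar (Fin 2) r := by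
  rw [← QuotientGroup.mk_mul, ← QuotientGroup.mk_mul, QuotientGroup.eq] at h
  obtain ⟨r, hr, hs⟩ := Matrix.SpecialLinearGroup.mem_center_iff.mp h
  simp only [Fintype.card_fin] at hr
  refine ⟨r, hr, ?_⟩
  have key : B * A = (A * B) * ((A * B)⁻¹ * (B * A)) := by group
  rw [show B.1 * A.1 = (B * A).1 from rfl, key,
    Matrix.SpecialLinearGroup.coe_mul (A * B) _, ← hs,
    Matrix.SpecialLinearGroup.coe_mul]

private lemma order_three' (F : Type) [Field F]
    (B : Matrix.SpecialLinearGroup (Fin 2) F)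
    (hcube : B.1 * B.1 * B.1 = 1) (hent : B.1 1 0 = 1) :
    orderOf (B : Matrix.ProjectiveSpecialLinearGroup (Fin 2) F) = 3 := by
  haveI : Fact (Nat.Prime 3) := ⟨by norm_num⟩
  apply orderOf_eq_prime
  · have hB3 : B ^ 3 = 1 := by
      apply Subtype.ext
      rw [Matrix.SpecialLinearGroup.coe_pow, pow_succ, pow_succ, pow_one]
      exact hcube
    rw [← QuotientGroup.mk_pow, hB3, QuotientGroup.mk_one]
  · intro h
    rw [QuotientGroup.eq_one_iff] at h
    obtain ⟨r, hr, hs⟩ := Matrix.SpecialLinearGroup.mem_center_iff.mp h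
    have := congrFun (congrFun hs 1) 0
    rw [hent, Matrix.scalar_apply, Matrix.diagonal_apply_ne _ (by decide)] at this
    exact one_ne_zero this.symm

private lemma scalar_fin_two (F : Type) [Field F] (r : F) :
    Matrix.scalar (Fin 2) r = !![r, 0; 0, r] := by
  ext i j
  fin_cases i <;> fin_cases j <;>
    simp [Matrix.scalar_apply, Matrix.diagonal_apply]

/-- For `q = p^k` with `p` an odd prime, `p ≠ 3`: if `x ∈ PSL(2,q)` commutes with every
element of order `3` in `PSL(2,q)`, then `x` is the identity. -/
theorem stmt18 (p k : ℕ) (hp : p.Prime) (hodd : Odd p) (hp3 : p ≠ 3) (hk : 0 < k)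
    (F : Type) [Field F] [Fintype F] (hcard : Fintype.card F = p ^ k)
    (x : Matrix.ProjectiveSpecialLinearGroup (Fin 2) F)
    (hx : ∀ y : Matrix.ProjectiveSpecialLinearGroup (Fin 2) F,
      orderOf y = 3 → x * y = y * x) :
    x = 1 := by
  -- characteristic facts
  have hpF : (p : F) = 0 := by
    have := FiniteField.cast_card_eq_zero F
    rw [hcard] at this
    push_cast at this
    exact pow_eq_zero_iff hk.ne' |>.mp this
  haveI hcharp : CharP F p := (CharP.charP_iff_prime_eq_zero hp).mpr hpF
  have hp2 : p ≠ 2 := by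
    rintro rfl
    simp [Nat.odd_iff] at hodd
  have h2 : (2 : F) ≠ 0 := by
    have := CharP.cast_ne_zero_of_ne_of_prime F (p := p) Nat.prime_two hp2
    simpa using this
  have h3 : (3 : F) ≠ 0 := by
    have := CharP.cast_ne_zero_of_ne_of_prime F (p := p) Nat.prime_three hp3
    simpa using this
  -- the two order-3 elements
  set C : Matrix.SpecialLinearGroup (Fin 2) F :=
    ⟨!![0, -1; 1, -1], by simp [Matrix.det_fin_two_of]⟩ with hC
  set C' : Matrix.SpecialLinearGroup (Fin 2) F :=
    ⟨!![1, -3; 1, -2], by norm_num [Matrix.det_fin_two_of]⟩ with hC'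
  have hCorder : orderOf (C : Matrix.ProjectiveSpecialLinearGroup (Fin 2) F) = 3 := by
    apply order_three'
    · show !![(0:F), -1; 1, -1] * !![(0:F), -1; 1, -1] * !![(0:F), -1; 1, -1] = 1
      rw [Matrix.mul_fin_two, Matrix.mul_fin_two]
      norm_num
      ext i j
      fin_cases i <;> fin_cases j <;> simp
    · rfl
  have hC'order : orderOf (C' : Matrix.ProjectiveSpecialLinearGroup (Fin 2) F) = 3 := by
    apply order_three'
    · show !![(1:F), -3; 1, -2] * !![(1:F), -3; 1, -2] * !![(1:F), -3; 1, -2] = 1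
      rw [Matrix.mul_fin_two, Matrix.mul_fin_two]
      norm_num
      ext i j
      fin_cases i <;> fin_cases j <;> simp
    · rfl
  obtain ⟨A, rfl⟩ := QuotientGroup.mk_surjective x
  obtain ⟨r, hr2, hrel⟩ := psl_comm F A C (hx _ hCorder)
  obtain ⟨s, hs2, hsrel⟩ := psl_comm F A C' (hx _ hC'order)
  -- entries of A
  set a := A.1 0 0 with ha
  set b := A.1 0 1 with hb
  set c := A.1 1 0 with hc
  set d := A.1 1 1 with hd
  have hA : A.1 = !![a, b; c, d] := by
    ext i j; fin_cases i <;> fin_cases j <;> rfl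
  have hdet : a * d - b * c = 1 := by
    have := A.2
    rw [Matrix.det_fin_two] at this
    exact this
  rw [hA, scalar_fin_two, show (C.1 : Matrix (Fin 2) (Fin 2) F) = !![0,-1;1,-1] from rfl,
    Matrix.mul_fin_two, Matrix.mul_fin_two, Matrix.mul_fin_two] at hrel
  rw [hA, scalar_fin_two, show (C'.1 : Matrix (Fin 2) (Fin 2) F) = !![1,-3;1,-2] from rfl,
    Matrix.mul_fin_two, Matrix.mul_fin_two, Matrix.mul_fin_two] at hsrel
  have E00 := congrFun (congrFun hrel 0) 0
  have E01 := congrFun (congrFun hrel 0) 1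
  have E10 := congrFun (congrFun hrel 1) 0
  have E11 := congrFun (congrFun hrel 1) 1
  have F00 := congrFun (congrFun hsrel 0) 0
  have F01 := congrFun (congrFun hsrel 0) 1
  have F10 := congrFun (congrFun hsrel 1) 0
  have F11 := congrFun (congrFun hsrel 1) 1
  simp at E00 E01 E10 E11 F00 F01 F10 F11
  -- case analysis on r and s
  have hrc : r = 1 ∨ r = -1 := by
    rcases mul_eq_zero.mp (show (r - 1) * (r + 1) = 0 by linear_combination hr2) with h | h
    · exact Or.inl (sub_eq_zero.mp h)
    · exact Or.inr (eq_neg_of_add_eq_zero_left h)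
  have hsc : s = 1 ∨ s = -1 := by
    rcases mul_eq_zero.mp (show (s - 1) * (s + 1) = 0 by linear_combination hs2) with h | h
    · exact Or.inl (sub_eq_zero.mp h)
    · exact Or.inr (eq_neg_of_add_eq_zero_left h)
  have two_cancel : ∀ t : F, 2 * t = 0 → t = 0 := by
    intro t ht
    rcases mul_eq_zero.mp ht with h | h
    · exact absurd h h2
    · exact h
  have three_cancel : ∀ t : F, 3 * t = 0 → t = 0 := by
    intro t ht
    rcases mul_eq_zero.mp ht with h | h
    · exact absurd h h3
    · exact h
  rcases hrc with rfl | rfl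
  · rcases hsc with rfl | rfl
    · -- r = 1, s = 1 : the good case
      have hb0 : b = 0 := two_cancel _ (by linear_combination (-3) * E00 + F00)
      have hc0 : c = 0 := by linear_combination -E00 - hb0
      have hd0 : d = a := by linear_combination -E01 + hb0
      have ha2 : a ^ 2 = 1 := by linear_combination hdet - a * hd0 + b * hc0
      rw [QuotientGroup.eq_one_iff]
      refine Matrix.SpecialLinearGroup.mem_center_iff.mpr ⟨a, ?_, ?_⟩
      · simpa using ha2
      · rw [scalar_fin_two, hA, hb0, hc0, hd0]
    · -- r = 1, s = -1 : impossible
      exfalso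
      have ha0 : a = 0 :=
        two_cancel _ (two_cancel _ (by linear_combination (-1) * F00 + (-1) * F01 + 3 * E00 + 3 * E01))
      have hb0 : b = 0 :=
        two_cancel _ (two_cancel _ (by linear_combination F00 + (-3) * E00 + (-2) * ha0))
      exact one_ne_zero (show (1 : F) = 0 by linear_combination -hdet + d * ha0 - c * hb0)
  · have hb0 : b = 0 := two_cancel _ (by linear_combination E00 - E01 - E10)
    have hc0 : c = 0 := by linear_combination -E00 + hb0
    have hd0 : d = -a := by linear_combination -E01 - hb0
    rcases hsc with rfl | rfl
    · -- r = -1, s = 1 : impossible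
      exfalso
      have ha0 : a = 0 :=
        three_cancel _ (two_cancel _ (by linear_combination F01 + 3 * hd0 - 3 * hb0))
      exact one_ne_zero (show (1 : F) = 0 by linear_combination -hdet + d * ha0 - c * hb0)
    · -- r = -1, s = -1 : impossible
      exfalso
      have ha0 : a = 0 := two_cancel _ (by linear_combination F00 - hb0 + 3 * hc0)
      exact one_ne_zero (show (1 : F) = 0 by linear_combination -hdet + d * ha0 - c * hb0)
end
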